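/- arXiv:2308.01576 — 3 statements merged into one kernel-verified Lean document; each statement's English description precedes it below -/
import Mathlib

section
/- Let $I, f$ be real numbers with $|I| > 1$. Then real numbers $\lambda, \nu$ satisfy simultaneously $\lambda < 1$, $\nu < 1$, $(I-1)\lambda - (1+I)\nu + 2 = 0$ and $(1-\lambda)(1-\nu) = e^{4f}$ if and only if $\lambda = 1 - \sqrt{(I+1)/(I-1)}\, e^{2f}$ and $\nu = 1 - \sqrt{(I-1)/(I+1)}\, e^{2f}$. -/
/-- Lemma 3.7 (real-number content): for `|I| > 1`, the pair `(λ, ν)` satisfies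
`λ < 1`, `ν < 1`, the line equation and the hyperbola equation iff it equals the
explicit solution. -/
theorem stmt_1 (I f : ℝ) (hI : 1 < |I|) (lam nu : ℝ) :
    (lam < 1 ∧ nu < 1 ∧ (I - 1) * lam - (1 + I) * nu + 2 = 0 ∧
      (1 - lam) * (1 - nu) = Real.exp (4 * f)) ↔
    (lam = 1 - Real.sqrt ((I + 1) / (I - 1)) * Real.exp (2 * f) ∧
      nu = 1 - Real.sqrt ((I - 1) / (I + 1)) * Real.exp (2 * f)) := by
  have hcase : 1 < I ∨ I < -1 := by
    rcases abs_cases I with ⟨h1, h2⟩ | ⟨h1, h2⟩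
    · left; linarith
    · right; linarith
  have h1 : I - 1 ≠ 0 := by rcases hcase with h | h <;> intro h0 <;> linarith
  have h2 : I + 1 ≠ 0 := by rcases hcase with h | h <;> intro h0 <;> linarith
  have hr : 0 < (I + 1) / (I - 1) := by
    rcases hcase with h | h
    · apply div_pos <;> linarith
    · apply div_pos_of_neg_of_neg <;> linarith
  have hr' : 0 < (I - 1) / (I + 1) := by
    rcases hcase with h | h
    · apply div_pos <;> linarith
    · apply div_pos_of_neg_of_neg <;> linarith
  set s := Real.sqrt ((I + 1) / (I - 1)) with hsdef
  set t := Real.sqrt ((I - 1) / (I + 1)) with htdef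
  have hs : 0 < s := Real.sqrt_pos.mpr hr
  have ht : 0 < t := Real.sqrt_pos.mpr hr'
  have hs2 : s ^ 2 = (I + 1) / (I - 1) := Real.sq_sqrt hr.le
  have ht2 : t ^ 2 = (I - 1) / (I + 1) := Real.sq_sqrt hr'.le
  have hkey : (I - 1) * s ^ 2 = I + 1 := by rw [hs2]; field_simp
  have hkey2 : (I + 1) * t ^ 2 = I - 1 := by rw [ht2]; field_simp
  have hst : s * t = 1 := by
    rw [hsdef, htdef, ← Real.sqrt_mul hr.le]
    have : (I + 1) / (I - 1) * ((I - 1) / (I + 1)) = 1 := by field_simp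
    rw [this, Real.sqrt_one]
  set E := Real.exp (2 * f) with hEdef
  have hE : 0 < E := Real.exp_pos _
  have hE4 : Real.exp (4 * f) = E ^ 2 := by
    rw [hEdef, sq, ← Real.exp_add]; ring_nf
  constructor
  · rintro ⟨hl, hn, hline, hhyp⟩
    have ha : 0 < 1 - lam := by linarith
    have hb : 0 < 1 - nu := by linarith
    have hline' : (I - 1) * (1 - lam) = (I + 1) * (1 - nu) := by linarith
    have hhyp' : (1 - lam) * (1 - nu) = E ^ 2 := by rw [hhyp, hE4]
    have haa : (I - 1) * ((1 - lam) ^ 2 - s ^ 2 * E ^ 2) = 0 := by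
      have : (I - 1) * (1 - lam) ^ 2 = (I + 1) * E ^ 2 := by
        calc (I - 1) * (1 - lam) ^ 2 = ((I - 1) * (1 - lam)) * (1 - lam) := by ring
        _ = ((I + 1) * (1 - nu)) * (1 - lam) := by rw [hline']
        _ = (I + 1) * ((1 - lam) * (1 - nu)) := by ring
        _ = (I + 1) * E ^ 2 := by rw [hhyp']
      linear_combination this - E ^ 2 * hkey
    have hbb : (I + 1) * ((1 - nu) ^ 2 - t ^ 2 * E ^ 2) = 0 := by
      have : (I + 1) * (1 - nu) ^ 2 = (I - 1) * E ^ 2 := by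
        calc (I + 1) * (1 - nu) ^ 2 = ((I + 1) * (1 - nu)) * (1 - nu) := by ring
        _ = ((I - 1) * (1 - lam)) * (1 - nu) := by rw [hline']
        _ = (I - 1) * ((1 - lam) * (1 - nu)) := by ring
        _ = (I - 1) * E ^ 2 := by rw [hhyp']
      linear_combination this - E ^ 2 * hkey2
    have ha2 : (1 - lam) ^ 2 - s ^ 2 * E ^ 2 = 0 := by
      rcases mul_eq_zero.mp haa with h | h
      · exact absurd h h1
      · exact h
    have hb2 : (1 - nu) ^ 2 - t ^ 2 * E ^ 2 = 0 := by
      rcases mul_eq_zero.mp hbb with h | h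
      · exact absurd h h2
      · exact h
    constructor
    · have hfac : ((1 - lam) - s * E) * ((1 - lam) + s * E) = 0 := by linear_combination ha2
      rcases mul_eq_zero.mp hfac with h | h
      · linarith
      · linarith [mul_pos hs hE]
    · have hfac : ((1 - nu) - t * E) * ((1 - nu) + t * E) = 0 := by linear_combination hb2
      rcases mul_eq_zero.mp hfac with h | h
      · linarith
      · linarith [mul_pos ht hE]
  · rintro ⟨hlam, hnu⟩
    subst hlam hnu
    refine ⟨by linarith [mul_pos hs hE], by linarith [mul_pos ht hE], ?_, ?_⟩
    · linear_combination (-(t * E)) * hkey + ((I - 1) * s * E) * hst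
    · rw [hE4]; linear_combination E ^ 2 * hst
end

section
/- Let $n \geq 1$, let $I \in \mathbb{R}$ with $-1 < I < 1$, and set $a_0 = \sqrt{(1+I)/(1-I)}$. Let $V$ be a $2n$-dimensional real vector space with basis $f_1, \dots, f_{2n}$, and let $\omega$ be the alternating bilinear form on $V$ determined by $\omega(f_i, f_j) = 0 = \omega(f_{n+i}, f_{n+j})$ and $\omega(f_i, f_{n+j}) = -\delta_{ij}$ for $1 \leq i, j \leq n$. For a subset $S \subseteq \{1, \dots, n\}$ define the linear map $F_S : V \to V$ by $F_S f_i = a_0 f_{n+i}$ if $i \in S$, $F_S f_i = -a_0 f_{n+i}$ if $i \notin S$, $F_S f_{n+i} = (1/a_0) f_i$ if $i \in S$, $F_S f_{n+i} = -(1/a_0) f_i$ if $i \notin S$, and define the symmetric bilinear form $g_S$ on $V$ by $g_S(f_i, f_i) = -a_0$ if $i \in S$, $g_S(f_i, f_i) = a_0$ if $i \notin S$, $g_S(f_{n+i}, f_{n+i}) = 1/a_0$ if $i \in S$, $g_S(f_{n+i}, f_{n+i}) = -1/a_0$ if $i \notin S$, and $g_S(f_k, f_l) = 0$ whenever $k \neq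 l$. Then $F_S \circ F_S = \mathrm{id}_V$, $g_S$ is nondegenerate, and $\omega(x, y) = g_S(x, F_S y)$ for all $x, y \in V$. -/
/-!
Put `c i = a₀` for `i ∈ S` and `c i = -a₀` otherwise, which is nonzero because `a₀ > 0` for
`|I| < 1`. Then, uniformly in `S`, `F` exchanges `fᵢ` and `f_{n+i}` with the factors `c i` and
`(c i)⁻¹`, and `g` is diagonal with entries `-c i` and `(c i)⁻¹`. Everything is then checked on
basis vectors: `F² fᵢ = (c i)⁻¹ c i fᵢ`, the diagonal of `g` has no zero, and
`g(fᵢ, F f_{n+i}) = (c i)⁻¹ (-c i) = -1`, `g(f_{n+i}, F fᵢ) = c i (c i)⁻¹ = 1 = ω(f_{n+i}, fᵢ)`,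
the last by skew-symmetry of `ω`.
-/

open LinearMap Module

section SwapBasis

variable {K V ι : Type*} [Field K] [AddCommGroup V] [Module K V] {b : Basis (ι ⊕ ι) K V}
  {c : ι → K} {F : V →ₗ[K] V}

theorem LinearMap.comp_self_eq_id_of_basis_swap (hc : ∀ i, c i ≠ 0)
    (hFl : ∀ i, F (b (.inl i)) = c i • b (.inr i))
    (hFr : ∀ i, F (b (.inr i)) = (c i)⁻¹ • b (.inl i)) :
    F ∘ₗ F = LinearMap.id := by
  refine b.ext ?_
  rintro (i | i) <;> simp [hFl, hFr, smul_smul, hc i]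

theorem LinearMap.IsAlt.eq_compl₂_of_basis_swap [DecidableEq ι] {ω g : V →ₗ[K] V →ₗ[K] K}
    (hω : ω.IsAlt)
    (hω₁ : ∀ i j, ω (b (.inl i)) (b (.inl j)) = 0)
    (hω₂ : ∀ i j, ω (b (.inr i)) (b (.inr j)) = 0)
    (hω₃ : ∀ i j, ω (b (.inl i)) (b (.inr j)) = -(if i = j then 1 else 0))
    (hc : ∀ i, c i ≠ 0)
    (hFl : ∀ i, F (b (.inl i)) = c i • b (.inr i))
    (hFr : ∀ i, F (b (.inr i)) = (c i)⁻¹ • b (.inl i))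
    (hg : g.IsOrthoᵢ b)
    (hgl : ∀ i, g (b (.inl i)) (b (.inl i)) = -c i)
    (hgr : ∀ i, g (b (.inr i)) (b (.inr i)) = (c i)⁻¹) :
    ω = g.compl₂ F := by
  have hg₀ := isOrthoᵢ_def.mp hg
  refine ext_basis b b ?_
  rintro (i | i) (j | j)
  · simp [hω₁, hFl, hg₀ _ _ Sum.inl_ne_inr]
  · obtain rfl | hij := eq_or_ne i j
    · simp [hω₃, hFr, hgl, hc i]
    · simp [hω₃, hFr, hij, hg₀ _ _ (Sum.inl_injective.ne hij)]
  · rw [← hω.neg, hω₃]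
    obtain rfl | hij := eq_or_ne i j
    · simp [hFl, hgr, hc i]
    · simp [hFl, hij.symm, hg₀ _ _ (Sum.inr_injective.ne hij)]
  · simp [hω₂, hFr, hg₀ _ _ Sum.inr_ne_inl]

end SwapBasis

theorem stmt_12_general (n : ℕ) (I : ℝ) (hI₁ : -1 < I) (hI₂ : I < 1)
    (a₀ : ℝ) (ha₀ : a₀ = Real.sqrt ((1 + I) / (1 - I)))
    {V : Type*} [AddCommGroup V] [Module ℝ V]
    (b : Module.Basis (Fin n ⊕ Fin n) ℝ V)
    (ω : V →ₗ[ℝ] V →ₗ[ℝ] ℝ)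
    (hω_alt : ∀ x : V, ω x x = 0)
    (hω₁ : ∀ i j : Fin n, ω (b (Sum.inl i)) (b (Sum.inl j)) = 0)
    (hω₂ : ∀ i j : Fin n, ω (b (Sum.inr i)) (b (Sum.inr j)) = 0)
    (hω₃ : ∀ i j : Fin n, ω (b (Sum.inl i)) (b (Sum.inr j)) = -(if i = j then 1 else 0))
    (S : Finset (Fin n))
    (F : V →ₗ[ℝ] V)
    (hF₁ : ∀ i ∈ S, F (b (Sum.inl i)) = a₀ • b (Sum.inr i))
    (hF₂ : ∀ i ∉ S, F (b (Sum.inl i)) = -(a₀ • b (Sum.inr i)))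
    (hF₃ : ∀ i ∈ S, F (b (Sum.inr i)) = (1 / a₀) • b (Sum.inl i))
    (hF₄ : ∀ i ∉ S, F (b (Sum.inr i)) = -((1 / a₀) • b (Sum.inl i)))
    (g : V →ₗ[ℝ] V →ₗ[ℝ] ℝ)
    (hg₁ : ∀ i ∈ S, g (b (Sum.inl i)) (b (Sum.inl i)) = -a₀)
    (hg₂ : ∀ i ∉ S, g (b (Sum.inl i)) (b (Sum.inl i)) = a₀)
    (hg₃ : ∀ i ∈ S, g (b (Sum.inr i)) (b (Sum.inr i)) = 1 / a₀)
    (hg₄ : ∀ i ∉ S, g (b (Sum.inr i)) (b (Sum.inr i)) = -(1 / a₀))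
    (hg₅ : ∀ k l : Fin n ⊕ Fin n, k ≠ l → g (b k) (b l) = 0) :
    F ∘ₗ F = LinearMap.id ∧
    (∀ x : V, (∀ y : V, g x y = 0) → x = 0) ∧
    (∀ x y : V, ω x y = g x (F y)) := by
  have ha : a₀ ≠ 0 := ha₀ ▸ (Real.sqrt_pos.mpr (div_pos (by linarith) (by linarith))).ne'
  set c : Fin n → ℝ := fun i => if i ∈ S then a₀ else -a₀
  have hc : ∀ i, c i ≠ 0 := fun i => by by_cases hi : i ∈ S <;> simp [c, hi, ha]
  have hFl : ∀ i, F (b (.inl i)) = c i • b (.inr i) := fun i => by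
    by_cases hi : i ∈ S <;> simp [c, hi, hF₁, hF₂]
  have hFr : ∀ i, F (b (.inr i)) = (c i)⁻¹ • b (.inl i) := fun i => by
    by_cases hi : i ∈ S <;> simp [c, hi, hF₃, hF₄]
  have hgl : ∀ i, g (b (.inl i)) (b (.inl i)) = -c i := fun i => by
    by_cases hi : i ∈ S <;> simp [c, hi, hg₁, hg₂]
  have hgr : ∀ i, g (b (.inr i)) (b (.inr i)) = (c i)⁻¹ := fun i => by
    by_cases hi : i ∈ S <;> simp [c, hi, hg₃, hg₄]
  have hg : g.IsOrthoᵢ b := isOrthoᵢ_def.mpr hg₅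
  refine ⟨comp_self_eq_id_of_basis_swap hc hFl hFr,
    hg.separatingLeft_of_not_isOrtho_basis_self b ?_, fun x y => ?_⟩
  · rintro (i | i)
    · simpa [hgl] using hc i
    · simpa [hgr] using hc i
  · rw [IsAlt.eq_compl₂_of_basis_swap hω_alt hω₁ hω₂ hω₃ hc hFl hFr hg hgl hgr, compl₂_apply]

/-- Verification of the almost para-Kähler structures `(g_S, F_S)` on the base:
with the basis `f₁,…,f₂ₙ` indexed by `Fin n ⊕ Fin n` (`Sum.inl i ↔ fᵢ`,
`Sum.inr i ↔ f_{n+i}`), the tensors `F_S` and `g_S` satisfy `F_S² = id`,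
`g_S` is nondegenerate, and `ω(x,y) = g_S(x, F_S y)`. -/
theorem stmt_12 (n : ℕ) (hn : 1 ≤ n) (I : ℝ) (hI₁ : -1 < I) (hI₂ : I < 1)
    (a₀ : ℝ) (ha₀ : a₀ = Real.sqrt ((1 + I) / (1 - I)))
    {V : Type*} [AddCommGroup V] [Module ℝ V]
    (b : Module.Basis (Fin n ⊕ Fin n) ℝ V)
    (ω : V →ₗ[ℝ] V →ₗ[ℝ] ℝ)
    (hω_alt : ∀ x : V, ω x x = 0)
    (hω₁ : ∀ i j : Fin n, ω (b (Sum.inl i)) (b (Sum.inl j)) = 0)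
    (hω₂ : ∀ i j : Fin n, ω (b (Sum.inr i)) (b (Sum.inr j)) = 0)
    (hω₃ : ∀ i j : Fin n, ω (b (Sum.inl i)) (b (Sum.inr j)) = -(if i = j then 1 else 0))
    (S : Finset (Fin n))
    (F : V →ₗ[ℝ] V)
    (hF₁ : ∀ i ∈ S, F (b (Sum.inl i)) = a₀ • b (Sum.inr i))
    (hF₂ : ∀ i ∉ S, F (b (Sum.inl i)) = -(a₀ • b (Sum.inr i)))
    (hF₃ : ∀ i ∈ S, F (b (Sum.inr i)) = (1 / a₀) • b (Sum.inl i))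
    (hF₄ : ∀ i ∉ S, F (b (Sum.inr i)) = -((1 / a₀) • b (Sum.inl i)))
    (g : V →ₗ[ℝ] V →ₗ[ℝ] ℝ)
    (hg_symm : ∀ x y : V, g x y = g y x)
    (hg₁ : ∀ i ∈ S, g (b (Sum.inl i)) (b (Sum.inl i)) = -a₀)
    (hg₂ : ∀ i ∉ S, g (b (Sum.inl i)) (b (Sum.inl i)) = a₀)
    (hg₃ : ∀ i ∈ S, g (b (Sum.inr i)) (b (Sum.inr i)) = 1 / a₀)
    (hg₄ : ∀ i ∉ S, g (b (Sum.inr i)) (b (Sum.inr i)) = -(1 / a₀))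
    (hg₅ : ∀ k l : Fin n ⊕ Fin n, k ≠ l → g (b k) (b l) = 0) :
    F ∘ₗ F = LinearMap.id ∧
    (∀ x : V, (∀ y : V, g x y = 0) → x = 0) ∧
    (∀ x y : V, ω x y = g x (F y)) :=
  stmt_12_general n I hI₁ hI₂ a₀ ha₀ b ω hω_alt hω₁ hω₂ hω₃ S F hF₁ hF₂ hF₃ hF₄ g hg₁ hg₂ hg₃ hg₄
    hg₅
end

section
/- Let $\kappa, \mu, a$ be real numbers with $\kappa < 1$ and $a > 0$. Set $\tilde\kappa = (\kappa + a^2 - 1)/a^2$ and $\tilde\mu = (\mu + 2a - 2)/a$. Then $\tilde\kappa < 1$ and $(1 - \tilde\mu/2)/\sqrt{1 - \tilde\kappa} = (1 - \mu/2)/\sqrt{1 - \kappa}$. -/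
/-- Invariance of the Boeckx index under `𝒟ₐ`-homothetic transformations. -/
theorem stmt_14 (kappa mu a : ℝ) (hk : kappa < 1) (ha : 0 < a) :
    (kappa + a ^ 2 - 1) / a ^ 2 < 1 ∧
    (1 - ((mu + 2 * a - 2) / a) / 2) / Real.sqrt (1 - (kappa + a ^ 2 - 1) / a ^ 2) =
      (1 - mu / 2) / Real.sqrt (1 - kappa) := by
  have ha2 : (0:ℝ) < a ^ 2 := by positivity
  constructor
  · rw [div_lt_one ha2]; linarith
  · have h1 : 1 - (kappa + a ^ 2 - 1) / a ^ 2 = (1 - kappa) / a ^ 2 := by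
      field_simp; ring
    rw [h1, Real.sqrt_div' _ (by linarith)]
    rw [Real.sqrt_sq ha.le]
    have hs : Real.sqrt (1 - kappa) ≠ 0 := Real.sqrt_ne_zero'.mpr (by linarith)
    field_simp
    ring
end
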